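/- If f̂ ∈ ℝ^p is a global minimizer of g₂(f) = λ₂ Σ_{(i,j)∈N} w_{ij}|f_i − f_j| + ½‖f − m‖₂², then the vector f* defined coordinatewise by f*_i = t_{λ₁}(f̂_i) (elementwise soft-thresholding with threshold λ₁) is a global minimizer of g₁(f) = λ₁‖f‖₁ + λ₂ Σ_{(i,j)∈N} w_{ij}|f_i − f_j| + ½‖f − m‖₂². -/

import Mathlib

/-!
Write `x = fhat`, `y = t_{λ₁} ∘ x` and `d = f - y`. Minimality of `x` for `g₂` along the ray
`x + t d`, `t → 0⁺`, gives `0 ≤ λ₂ (P f - P y) + ⟨x - m, d⟩` for the fused penalty `P`: since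
soft-thresholding is monotone, `y_i - y_j` has the sign of `x_i - x_j` (and vanishes with it), so the
one-sided derivative of `P` at `x` in direction `d` is at most `P f - P y`. On the other hand
`x - y` is a subgradient of `λ₁ ‖·‖₁` at `y` (soft-thresholding is the prox of `λ₁ ‖·‖₁`), and
`½ ‖f - m‖² ≥ ½ ‖y - m‖² + ⟨y - m, d⟩`. Adding the three inequalities gives `g₁ y ≤ g₁ f`.
-/

open Filter Topology Finset

noncomputable def softThresh (τ σ : ℝ) : ℝ := Real.sign σ * max (|σ| - τ) 0

section SoftThresh

variable {τ : ℝ}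

lemma softThresh_eq_max_add_min (hτ : 0 ≤ τ) (σ : ℝ) :
    softThresh τ σ = max (σ - τ) 0 + min (σ + τ) 0 := by
  unfold softThresh
  rcases lt_trichotomy σ 0 with h | rfl | h
  · simp only [Real.sign_of_neg h, abs_of_neg h, max_def, min_def]
    split_ifs <;> linarith
  · simp [hτ]
  · simp only [Real.sign_of_pos h, abs_of_pos h, max_def, min_def]
    split_ifs <;> linarith

lemma monotone_softThresh (hτ : 0 ≤ τ) : Monotone (softThresh τ) := by
  intro a b hab
  simp only [softThresh_eq_max_add_min hτ]
  gcongr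

lemma softThresh_subgradient_ineq (hτ : 0 ≤ τ) (σ a : ℝ) :
    τ * |softThresh τ σ| + (σ - softThresh τ σ) * (a - softThresh τ σ) ≤ τ * |a| := by
  rw [softThresh_eq_max_add_min hτ]
  rcases le_total σ (-τ) with h | h
  · rw [max_eq_right (by linarith), min_eq_left (by linarith), zero_add,
      abs_of_nonpos (by linarith)]
    nlinarith [neg_abs_le a]
  rcases le_total τ σ with h' | h'
  · rw [max_eq_left (by linarith), min_eq_right (by linarith), add_zero,
      abs_of_nonneg (by linarith)]
    nlinarith [le_abs_self a]
  · rw [max_eq_right (by linarith), min_eq_right (by linarith), add_zero, abs_zero]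
    nlinarith [le_abs_self a, neg_abs_le a]

end SoftThresh

/-- `T u - T v` has the sign of `u - v` and vanishes with it, while `|·|` is affine near
`u - v ≠ 0`. -/
lemma Monotone.eventually_abs_sub_add_mul_sub_abs_le {T : ℝ → ℝ} (hT : Monotone T) (u v δ : ℝ) :
    ∀ᶠ t in 𝓝[>] (0 : ℝ), |u - v + t * δ| - |u - v| ≤ t * (|T u - T v + δ| - |T u - T v|) := by
  have hlim : Tendsto (fun t => u - v + t * δ) (𝓝[>] 0) (𝓝 (u - v)) := by
    have hcont : Continuous fun t : ℝ => u - v + t * δ := by fun_prop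
    simpa using (hcont.tendsto 0).mono_left nhdsWithin_le_nhds
  rcases lt_trichotomy u v with h | rfl | h
  · filter_upwards [self_mem_nhdsWithin, hlim.eventually_lt_const (sub_neg.2 h)]
      with t (ht : 0 < t) hneg
    rw [abs_of_neg hneg, abs_of_neg (sub_neg.2 h), abs_of_nonpos (sub_nonpos.2 (hT h.le))]
    nlinarith [neg_abs_le (T u - T v + δ)]
  · filter_upwards [self_mem_nhdsWithin] with t (ht : 0 < t)
    simp [abs_mul, abs_of_pos ht]
  · filter_upwards [self_mem_nhdsWithin, hlim.eventually_const_lt (sub_pos.2 h)]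
      with t (ht : 0 < t) hpos
    rw [abs_of_pos hpos, abs_of_pos (sub_pos.2 h), abs_of_nonneg (sub_nonneg.2 (hT h.le))]
    nlinarith [le_abs_self (T u - T v + δ)]

section FusedPenalty

variable {ι : Type*}

def fusedPenalty (N : Finset (ι × ι)) (w : ι × ι → ℝ) (f : ι → ℝ) : ℝ :=
  ∑ e ∈ N, w e * |f e.1 - f e.2|

lemma eventually_fusedPenalty_add_smul_sub_le {N : Finset (ι × ι)} {w : ι × ι → ℝ}
    (hw : ∀ e ∈ N, 0 ≤ w e) {T : ℝ → ℝ} (hT : Monotone T) (x f : ι → ℝ) :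
    ∀ᶠ t in 𝓝[>] (0 : ℝ), fusedPenalty N w (x + t • (f - T ∘ x)) - fusedPenalty N w x ≤
      t * (fusedPenalty N w f - fusedPenalty N w (T ∘ x)) := by
  filter_upwards [(eventually_all_finset N).2 fun e _ =>
    hT.eventually_abs_sub_add_mul_sub_abs_le (x e.1) (x e.2)
      (f e.1 - T (x e.1) - (f e.2 - T (x e.2)))]
    with t ht
  simp only [fusedPenalty, ← sum_sub_distrib, mul_sum]
  refine sum_le_sum fun e he => ?_
  have hedge := mul_le_mul_of_nonneg_left (ht e he) (hw e he)
  convert hedge using 1 <;>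
    simp only [Pi.add_apply, Pi.smul_apply, Pi.sub_apply, Function.comp_apply, smul_eq_mul] <;>
    ring_nf

end FusedPenalty

lemma nonneg_of_eventually_nonneg_mul_add_sq {a b : ℝ}
    (h : ∀ᶠ t in 𝓝[>] (0 : ℝ), 0 ≤ t * a + t ^ 2 * b) : 0 ≤ a := by
  have hlim : Tendsto (fun t => a + t * b) (𝓝[>] 0) (𝓝 a) := by
    have hcont : Continuous fun t : ℝ => a + t * b := by fun_prop
    simpa using (hcont.tendsto 0).mono_left nhdsWithin_le_nhds
  refine ge_of_tendsto hlim ?_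
  filter_upwards [self_mem_nhdsWithin, h] with t (ht : 0 < t) hnonneg
  exact nonneg_of_mul_nonneg_right (by linarith) ht

section Quadratic

variable {ι : Type*} [Fintype ι]

lemma sum_add_smul_sub_sq (x d m : ι → ℝ) (t : ℝ) :
    ∑ i, ((x + t • d) i - m i) ^ 2 =
      ∑ i, (x i - m i) ^ 2 + 2 * t * ∑ i, (x i - m i) * d i + t ^ 2 * ∑ i, d i ^ 2 := by
  simp only [mul_sum, ← sum_add_distrib]
  refine sum_congr rfl fun i _ => ?_
  simp only [Pi.add_apply, Pi.smul_apply, smul_eq_mul]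
  ring

lemma fused_minimizer_first_order {N : Finset (ι × ι)} {w : ι × ι → ℝ} (hw : ∀ e ∈ N, 0 ≤ w e)
    {lam : ℝ} (hlam : 0 ≤ lam) {T : ℝ → ℝ} (hT : Monotone T) {m x : ι → ℝ}
    (hmin : ∀ z, lam * fusedPenalty N w x + 1 / 2 * ∑ i, (x i - m i) ^ 2 ≤
      lam * fusedPenalty N w z + 1 / 2 * ∑ i, (z i - m i) ^ 2) (f : ι → ℝ) :
    0 ≤ lam * (fusedPenalty N w f - fusedPenalty N w (T ∘ x)) +
      ∑ i, (x i - m i) * (f i - T (x i)) := by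
  apply nonneg_of_eventually_nonneg_mul_add_sq (b := 1 / 2 * ∑ i, (f i - T (x i)) ^ 2)
  filter_upwards [eventually_fusedPenalty_add_smul_sub_le hw hT x f] with t ht
  have hx := hmin (x + t • (f - T ∘ x))
  simp only [sum_add_smul_sub_sq, Pi.sub_apply, Function.comp_apply] at hx
  nlinarith [mul_le_mul_of_nonneg_left ht hlam]

end Quadratic

/-- If `fhat` is a global minimizer of
`g₂(f) = λ₂ Σ_{(i,j)∈N} w_{ij} |f_i - f_j| + ½ ‖f - m‖₂²`,
then the elementwise soft-thresholding `f*_i = t_{λ₁}(fhat_i)` is a global minimizer of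
`g₁(f) = λ₁ ‖f‖₁ + λ₂ Σ_{(i,j)∈N} w_{ij} |f_i - f_j| + ½ ‖f - m‖₂²`. -/
theorem softthresh_of_fused_minimizer
    (p : ℕ) (m : Fin p → ℝ) (lam₁ lam₂ : ℝ) (hlam₁ : 0 ≤ lam₁) (hlam₂ : 0 ≤ lam₂)
    (N : Finset (Fin p × Fin p)) (w : Fin p × Fin p → ℝ) (hw : ∀ e ∈ N, 0 ≤ w e)
    (g₂ : (Fin p → ℝ) → ℝ)
    (hg₂ : ∀ f, g₂ f =
      lam₂ * ∑ e ∈ N, w e * |f e.1 - f e.2| + (1 / 2) * ∑ i, (f i - m i) ^ 2)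
    (g₁ : (Fin p → ℝ) → ℝ)
    (hg₁ : ∀ f, g₁ f = lam₁ * ∑ i, |f i| +
      lam₂ * ∑ e ∈ N, w e * |f e.1 - f e.2| + (1 / 2) * ∑ i, (f i - m i) ^ 2)
    (fhat : Fin p → ℝ) (hmin : ∀ f, g₂ fhat ≤ g₂ f) :
    ∀ f, g₁ (fun i => softThresh lam₁ (fhat i)) ≤ g₁ f := by
  intro f
  set y : Fin p → ℝ := fun i => softThresh lam₁ (fhat i)
  have hfirst : 0 ≤ lam₂ * (fusedPenalty N w f - fusedPenalty N w y) +
      ∑ i, (fhat i - m i) * (f i - y i) :=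
    fused_minimizer_first_order hw hlam₂ (monotone_softThresh hlam₁)
      (fun z => (hg₂ fhat).symm.trans_le ((hmin z).trans_eq (hg₂ z))) f
  have hl1 : lam₁ * ∑ i, |y i| + ∑ i, (fhat i - y i) * (f i - y i) ≤ lam₁ * ∑ i, |f i| := by
    simpa only [mul_sum, ← sum_add_distrib] using
      sum_le_sum fun i _ => softThresh_subgradient_ineq hlam₁ (fhat i) (f i)
  have hquad := sum_add_smul_sub_sq y (f - y) m 1
  simp only [one_smul, add_sub_cancel, one_pow, mul_one, one_mul, Pi.sub_apply] at hquad
  have hsplit : ∑ i, (fhat i - m i) * (f i - y i) =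
      ∑ i, (fhat i - y i) * (f i - y i) + ∑ i, (y i - m i) * (f i - y i) := by
    rw [← sum_add_distrib]
    exact sum_congr rfl fun i _ => by ring
  have hsq : 0 ≤ ∑ i, (f i - y i) ^ 2 := sum_nonneg fun i _ => sq_nonneg _
  rw [hg₁, hg₁]
  unfold fusedPenalty at hfirst
  linarith
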